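/- arXiv:1810.02882 — 2 statements merged into one kernel-verified Lean document; each statement's English description precedes it below -/
import Mathlib

section
/- For the lollipop graph L_{m,n} with m ≥ 3 and n ≥ 2, the fractional local metric dimension equals m/2. -/
open scoped Classical
open Finset

namespace FracLocal

/-- The local resolving neighborhood of a (potential) edge `uv`:
vertices whose distances to `u` and `v` differ. -/
noncomputable def locRes {V : Type*} [Fintype V] (G : SimpleGraph V) (u v : V) : Finset V :=
  Finset.univ.filter (fun x => G.dist x u ≠ G.dist x v)

/-- A local resolving function: values in `[0,1]` summing to at least `1`
on every local resolving neighborhood of an edge. -/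
def IsLRF {V : Type*} [Fintype V] (G : SimpleGraph V) (f : V → ℝ) : Prop :=
  (∀ x, 0 ≤ f x ∧ f x ≤ 1) ∧ ∀ u v, G.Adj u v → 1 ≤ ∑ x ∈ locRes G u v, f x

/-- The fractional local metric dimension. -/
noncomputable def ldimf {V : Type*} [Fintype V] (G : SimpleGraph V) : ℝ :=
  sInf {w : ℝ | ∃ f : V → ℝ, IsLRF G f ∧ w = ∑ x, f x}

/-- The (integral) local metric dimension. -/
noncomputable def ldim {V : Type*} [Fintype V] (G : SimpleGraph V) : ℕ :=
  sInf {k : ℕ | ∃ S : Finset V, S.card = k ∧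
    ∀ u v, G.Adj u v → (S ∩ locRes G u v).Nonempty}

/-- `l(G)`: the minimum cardinality of a local resolving neighborhood of an edge. -/
noncomputable def lG {V : Type*} [Fintype V] (G : SimpleGraph V) : ℕ :=
  sInf {k : ℕ | ∃ u v, G.Adj u v ∧ (locRes G u v).card = k}

/-- The closed neighborhood `N[u]`. -/
def closedNbhd {V : Type*} (G : SimpleGraph V) (u : V) : Set V :=
  insert u (G.neighborSet u)

/-- `u` and `v` are true twins: distinct vertices with `N[u] = N[v]`. -/
def TrueTwins {V : Type*} (G : SimpleGraph V) (u v : V) : Prop :=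
  u ≠ v ∧ closedNbhd G u = closedNbhd G v

end FracLocal

namespace FracLocal
/-- The lollipop graph `L_{m,n}`: a complete graph `K_m` joined to a path `P_n`
by a single edge (between vertex `0` of `K_m` and the end vertex `0` of `P_n`). -/
def lollipop (m n : ℕ) : SimpleGraph (Fin m ⊕ Fin n) :=
  SimpleGraph.fromRel (fun x y =>
    match x, y with
    | .inl a, .inl b => a ≠ b
    | .inr a, .inr b => (a : ℕ) + 1 = (b : ℕ)
    | .inl a, .inr b => (a : ℕ) = 0 ∧ (b : ℕ) = 0
    | .inr _, .inl _ => False)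
end FracLocal

set_option linter.unreachableTactic false
set_option linter.unusedTactic false

namespace FracLocal

variable {m n : ℕ}

lemma potential_le_walk {V : Type*} {G : SimpleGraph V} {g : V → ℕ}
    (hlip : ∀ x y, G.Adj x y → g x ≤ g y + 1) :
    ∀ {y u : V}, g u = 0 → ∀ w : G.Walk y u, g y ≤ w.length := by
  intro y u hu w
  induction w with
  | nil => omega
  | @cons a b c h p ih =>
    have h3 := hlip a b h
    have h4 := ih hu
    simp only [SimpleGraph.Walk.length_cons]
    omega

-- potential lemma
lemma dist_eq_of_potential {V : Type*} (G : SimpleGraph V) (u : V) (g : V → ℕ)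
    (hu : g u = 0) (hlip : ∀ x y, G.Adj x y → g x ≤ g y + 1)
    (hup : ∀ x, ∃ w : G.Walk x u, w.length = g x) (x : V) :
    G.dist x u = g x := by
  obtain ⟨w, hw⟩ := hup x
  have h1 : G.dist x u ≤ g x := hw ▸ SimpleGraph.dist_le w
  obtain ⟨w', hw'⟩ := SimpleGraph.Reachable.exists_walk_length_eq_dist ⟨w⟩
  have h2 := potential_le_walk hlip hu w'
  omega

variable {m n : ℕ}

lemma adj_inl_inl {a b : Fin m} (hab : a ≠ b) :
    (lollipop m n).Adj (.inl a) (.inl b) := by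
  rw [lollipop, SimpleGraph.fromRel_adj]
  exact ⟨by simpa using hab, Or.inl hab⟩

lemma adj_inl0_inr0 (hm : 0 < m) (hn : 0 < n) :
    (lollipop m n).Adj (.inl ⟨0, hm⟩) (.inr ⟨0, hn⟩) := by
  rw [lollipop, SimpleGraph.fromRel_adj]
  exact ⟨by simp, Or.inl ⟨rfl, rfl⟩⟩

lemma adj_inr_succ {j : ℕ} (hj : j + 1 < n) :
    (lollipop m n).Adj (.inr ⟨j, by omega⟩) (.inr ⟨j + 1, hj⟩) := by
  rw [lollipop, SimpleGraph.fromRel_adj]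
  refine ⟨by simp [Fin.ext_iff], Or.inl rfl⟩

lemma exists_walk_inr (hn : 0 < n) (j : ℕ) (hj : j < n) :
    ∃ w : (lollipop m n).Walk (Sum.inr ⟨j, hj⟩) (Sum.inr ⟨0, hn⟩), w.length = j := by
  induction j with
  | zero => exact ⟨.nil, rfl⟩
  | succ k ih =>
    obtain ⟨w, hw⟩ := ih (by omega)
    exact ⟨.cons (adj_inr_succ hj).symm w, by simp [hw]⟩


def gA (m n : ℕ) : Fin m ⊕ Fin n → ℕ
  | .inl a => if (a : ℕ) = 0 then 1 else 2
  | .inr j => (j : ℕ)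

def gB (b : Fin m) : Fin m ⊕ Fin n → ℕ
  | .inl a => if a = b then 0 else 1
  | .inr j => (j : ℕ) + 2

def gC (m n : ℕ) : Fin m ⊕ Fin n → ℕ
  | .inl a => if (a : ℕ) = 0 then 0 else 1
  | .inr j => (j : ℕ) + 1

lemma lollipop_adj {x y : Fin m ⊕ Fin n} (h : (lollipop m n).Adj x y) :
    (∃ a b : Fin m, a ≠ b ∧ x = .inl a ∧ y = .inl b) ∨
    (∃ (a : Fin m) (b : Fin n), (a:ℕ) = 0 ∧ (b:ℕ) = 0 ∧
      ((x = .inl a ∧ y = .inr b) ∨ (x = .inr b ∧ y = .inl a))) ∨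
    (∃ a b : Fin n, (a:ℕ) + 1 = (b:ℕ) ∧
      ((x = .inr a ∧ y = .inr b) ∨ (x = .inr b ∧ y = .inr a))) := by
  rw [lollipop, SimpleGraph.fromRel_adj] at h
  obtain ⟨hne, h⟩ := h
  rcases x with a | a <;> rcases y with b | b
  · exact Or.inl ⟨a, b, by simpa using hne, rfl, rfl⟩
  · rcases h with h | h
    · exact Or.inr (Or.inl ⟨a, b, h.1, h.2, Or.inl ⟨rfl, rfl⟩⟩)
    · exact h.elim
  · rcases h with h | h
    · exact h.elim
    · exact Or.inr (Or.inl ⟨b, a, h.1, h.2, Or.inr ⟨rfl, rfl⟩⟩)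
  · rcases h with h | h
    · exact Or.inr (Or.inr ⟨a, b, h, Or.inl ⟨rfl, rfl⟩⟩)
    · exact Or.inr (Or.inr ⟨b, a, h, Or.inr ⟨rfl, rfl⟩⟩)

lemma gA_lip (x y : Fin m ⊕ Fin n) (h : (lollipop m n).Adj x y) :
    gA m n x ≤ gA m n y + 1 := by
  rcases lollipop_adj h with ⟨a, b, hab, rfl, rfl⟩ |
    ⟨a, b, ha, hb, (⟨rfl, rfl⟩ | ⟨rfl, rfl⟩)⟩ | ⟨a, b, hab, (⟨rfl, rfl⟩ | ⟨rfl, rfl⟩)⟩ <;>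
    simp only [gA] <;> (try split_ifs) <;> omega

lemma gB_lip {b : Fin m} (hb : (b:ℕ) ≠ 0) (x y : Fin m ⊕ Fin n)
    (h : (lollipop m n).Adj x y) : gB b x ≤ gB b y + 1 := by
  rcases lollipop_adj h with ⟨a, c, hac, rfl, rfl⟩ |
    ⟨a, c, ha, hc, (⟨rfl, rfl⟩ | ⟨rfl, rfl⟩)⟩ | ⟨a, c, hac, (⟨rfl, rfl⟩ | ⟨rfl, rfl⟩)⟩ <;>
    simp only [gB] <;> (try split_ifs) <;> first | omega | (simp_all [Fin.ext_iff]; omega)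

lemma gC_lip (x y : Fin m ⊕ Fin n) (h : (lollipop m n).Adj x y) :
    gC m n x ≤ gC m n y + 1 := by
  rcases lollipop_adj h with ⟨a, b, hab, rfl, rfl⟩ |
    ⟨a, b, ha, hb, (⟨rfl, rfl⟩ | ⟨rfl, rfl⟩)⟩ | ⟨a, b, hab, (⟨rfl, rfl⟩ | ⟨rfl, rfl⟩)⟩ <;>
    simp only [gC] <;> (try split_ifs) <;> omega

lemma dist_to_inr0 (hm : 0 < m) (hn : 0 < n) (x : Fin m ⊕ Fin n) :
    (lollipop m n).dist x (Sum.inr ⟨0, hn⟩) = gA m n x := by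
  apply dist_eq_of_potential _ _ _ (by simp [gA]) gA_lip
  rintro (a | j)
  · by_cases ha : (a : ℕ) = 0
    · have : a = ⟨0, hm⟩ := by simp [Fin.ext_iff, ha]
      subst this
      exact ⟨.cons (adj_inl0_inr0 hm hn) .nil, by simp [gA, ha]⟩
    · refine ⟨.cons (adj_inl_inl (a := a) (b := ⟨0, hm⟩) (by simp [Fin.ext_iff, ha]))
        (.cons (adj_inl0_inr0 hm hn) .nil), by simp [gA, ha]⟩
  · obtain ⟨w, hw⟩ := exists_walk_inr hn j j.isLt
    exact ⟨by rw [← Fin.eta j j.isLt]; exact w, by simp [gA, hw]⟩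

lemma dist_to_inl {b : Fin m} (hm : 0 < m) (hn : 0 < n) (hb : (b:ℕ) ≠ 0)
    (x : Fin m ⊕ Fin n) : (lollipop m n).dist x (Sum.inl b) = gB b x := by
  apply dist_eq_of_potential _ _ _ (by simp [gB]) (gB_lip hb)
  rintro (a | j)
  · by_cases ha : a = b
    · subst ha; exact ⟨.nil, by simp [gB]⟩
    · exact ⟨.cons (adj_inl_inl ha) .nil, by simp [gB, ha]⟩
  · obtain ⟨w, hw⟩ := exists_walk_inr hn j j.isLt
    have hb0 : (⟨0, hm⟩ : Fin m) ≠ b := by simp [Fin.ext_iff]; omega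
    refine ⟨(w.append (.cons (adj_inl0_inr0 hm hn).symm (.cons (adj_inl_inl hb0) .nil))).copy
      (by rw [Fin.eta]) rfl, ?_⟩
    simp [gB, hw]

lemma dist_to_inl0 (hm : 0 < m) (hn : 0 < n) (x : Fin m ⊕ Fin n) :
    (lollipop m n).dist x (Sum.inl ⟨0, hm⟩) = gC m n x := by
  apply dist_eq_of_potential _ _ _ (by simp [gC]) gC_lip
  rintro (a | j)
  · by_cases ha : (a : ℕ) = 0
    · have : a = ⟨0, hm⟩ := by simp [Fin.ext_iff, ha]
      subst this; exact ⟨.nil, by simp [gC]⟩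
    · exact ⟨.cons (adj_inl_inl (by simp [Fin.ext_iff, ha])) .nil, by simp [gC, ha]⟩
  · obtain ⟨w, hw⟩ := exists_walk_inr hn j j.isLt
    refine ⟨(w.append (.cons (adj_inl0_inr0 hm hn).symm .nil)).copy (by rw [Fin.eta]) rfl, ?_⟩
    simp [gC, hw]


lemma mem_locRes {V : Type*} [Fintype V] {G : SimpleGraph V} {u v x : V} :
    x ∈ locRes G u v ↔ G.dist x u ≠ G.dist x v := by simp [locRes]

lemma locRes_comm {V : Type*} [Fintype V] {G : SimpleGraph V} {u v : V} :
    locRes G u v = locRes G v u := by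
  ext x; simp only [mem_locRes]; exact ne_comm

lemma pair_le_sum {V : Type*} {f : V → ℝ} (hf : ∀ x, 0 ≤ f x) {s : Finset V}
    {x y : V} (hxy : x ≠ y) (hx : x ∈ s) (hy : y ∈ s) :
    f x + f y ≤ ∑ z ∈ s, f z := by
  rw [← Finset.sum_pair hxy]
  apply Finset.sum_le_sum_of_subset_of_nonneg
  · intro z hz
    rcases Finset.mem_insert.1 hz with rfl | hz
    · exact hx
    · rw [Finset.mem_singleton.1 hz]; exact hy
  · exact fun i _ _ => hf i

noncomputable def fopt (m n : ℕ) : Fin m ⊕ Fin n → ℝ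
  | .inl a => if (a : ℕ) = 0 then 0 else 1/2
  | .inr j => if (j : ℕ) = 0 then 1/2 else 0

lemma fopt_nonneg (x : Fin m ⊕ Fin n) : 0 ≤ fopt m n x := by
  rcases x with a | j <;> simp only [fopt] <;> split_ifs <;> norm_num

lemma fopt_isLRF (hm : 3 ≤ m) (hn : 2 ≤ n) : IsLRF (lollipop m n) (fopt m n) := by
  have hm0 : 0 < m := by omega
  have hn0 : 0 < n := by omega
  set z0 : Fin m := ⟨0, hm0⟩ with hz0
  set w0 : Fin n := ⟨0, hn0⟩ with hw0
  set z1 : Fin m := ⟨1, by omega⟩ with hz1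
  constructor
  · intro x
    refine ⟨fopt_nonneg x, ?_⟩
    rcases x with a | j <;> simp only [fopt] <;> split_ifs <;> norm_num
  · -- main constraint
    have key : ∀ u v : Fin m ⊕ Fin n, (lollipop m n).Adj u v →
        ∃ x y : Fin m ⊕ Fin n, x ≠ y ∧ x ∈ locRes (lollipop m n) u v ∧
          y ∈ locRes (lollipop m n) u v ∧ fopt m n x = 1/2 ∧ fopt m n y = 1/2 := by
      intro u v h
      have hsym : locRes (lollipop m n) u v = locRes (lollipop m n) v u := locRes_comm
      rcases lollipop_adj h with ⟨a, b, hab, rfl, rfl⟩ |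
        ⟨a, b, ha, hb, (⟨rfl, rfl⟩ | ⟨rfl, rfl⟩)⟩ |
        ⟨a, b, hab, (⟨rfl, rfl⟩ | ⟨rfl, rfl⟩)⟩
      · -- K_m edge
        by_cases ha : (a : ℕ) = 0
        · -- a = z0, b ≠ 0
          have hb : (b : ℕ) ≠ 0 := by
            intro hb; exact hab (by simp [Fin.ext_iff, ha, hb])
          have haz : a = z0 := by simp [Fin.ext_iff, ha, hz0]
          subst haz
          refine ⟨.inl b, .inr w0, by simp, ?_, ?_, by simp [fopt, hb], by simp [fopt, hw0]⟩
          · rw [mem_locRes, dist_to_inl0 hm0 hn0, dist_to_inl hm0 hn0 hb]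
            simp [gB, gC, hb]
          · rw [mem_locRes, dist_to_inl0 hm0 hn0, dist_to_inl hm0 hn0 hb]
            simp [gB, gC, hw0]
        · by_cases hb : (b : ℕ) = 0
          · have hbz : b = z0 := by simp [Fin.ext_iff, hb, hz0]
            subst hbz
            refine ⟨.inl a, .inr w0, by simp, ?_, ?_, by simp [fopt, ha], by simp [fopt, hw0]⟩
            · rw [mem_locRes, dist_to_inl0 hm0 hn0, dist_to_inl hm0 hn0 ha]
              simp [gB, gC, ha]
            · rw [mem_locRes, dist_to_inl0 hm0 hn0, dist_to_inl hm0 hn0 ha]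
              simp [gB, gC, hw0]
          · refine ⟨.inl a, .inl b, by simpa using hab, ?_, ?_,
              by simp [fopt, ha], by simp [fopt, hb]⟩
            · rw [mem_locRes, dist_to_inl hm0 hn0 ha, dist_to_inl hm0 hn0 hb]
              simp [gB, hab]
            · rw [mem_locRes, dist_to_inl hm0 hn0 ha, dist_to_inl hm0 hn0 hb]
              simp [gB, hab, Ne.symm hab]
      · -- bridge edge, u = inl a, v = inr b
        have haz : a = z0 := by simp [Fin.ext_iff, ha, hz0]
        have hbz : b = w0 := by simp [Fin.ext_iff, hb, hw0]
        subst haz; subst hbz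
        have h1 : (z1 : ℕ) ≠ 0 := by simp [hz1]
        refine ⟨.inl z1, .inr w0, by simp, ?_, ?_, by simp [fopt, h1], by simp [fopt, hw0]⟩
        · rw [mem_locRes, dist_to_inl0 hm0 hn0, dist_to_inr0 hm0 hn0]
          simp [gA, gC, h1]
        · rw [mem_locRes, dist_to_inl0 hm0 hn0, dist_to_inr0 hm0 hn0]
          simp [gA, gC, hw0]
      · -- bridge edge, flipped
        rw [hsym]
        have haz : a = z0 := by simp [Fin.ext_iff, ha, hz0]
        have hbz : b = w0 := by simp [Fin.ext_iff, hb, hw0]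
        subst haz; subst hbz
        have h1 : (z1 : ℕ) ≠ 0 := by simp [hz1]
        refine ⟨.inl z1, .inr w0, by simp, ?_, ?_, by simp [fopt, h1], by simp [fopt, hw0]⟩
        · rw [mem_locRes, dist_to_inl0 hm0 hn0, dist_to_inr0 hm0 hn0]
          simp [gA, gC, h1]
        · rw [mem_locRes, dist_to_inl0 hm0 hn0, dist_to_inr0 hm0 hn0]
          simp [gA, gC, hw0]
      · -- path edge
        have h1 : (z1 : ℕ) ≠ 0 := by simp [hz1]
        refine ⟨.inl z1, .inr w0, by simp, ?_, ?_, by simp [fopt, h1], by simp [fopt, hw0]⟩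
        · rw [mem_locRes, SimpleGraph.dist_comm (G := lollipop m n) (u := Sum.inl z1) (v := Sum.inr a),
            SimpleGraph.dist_comm (G := lollipop m n) (u := Sum.inl z1) (v := Sum.inr b),
            dist_to_inl hm0 hn0 h1, dist_to_inl hm0 hn0 h1]
          simp only [gB]; omega
        · rw [mem_locRes, SimpleGraph.dist_comm (G := lollipop m n) (u := Sum.inr w0) (v := Sum.inr a),
            SimpleGraph.dist_comm (G := lollipop m n) (u := Sum.inr w0) (v := Sum.inr b),
            dist_to_inr0 hm0 hn0, dist_to_inr0 hm0 hn0]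
          simp only [gA]; omega
      · -- path edge flipped
        rw [hsym]
        refine ⟨.inl z1, .inr w0, by simp, ?_, ?_,
          by simp [fopt, hz1], by simp [fopt, hw0]⟩
        · rw [mem_locRes, SimpleGraph.dist_comm (G := lollipop m n) (u := Sum.inl z1) (v := Sum.inr a),
            SimpleGraph.dist_comm (G := lollipop m n) (u := Sum.inl z1) (v := Sum.inr b),
            dist_to_inl hm0 hn0 (by simp [hz1]), dist_to_inl hm0 hn0 (by simp [hz1])]
          simp only [gB]; omega
        · rw [mem_locRes, SimpleGraph.dist_comm (G := lollipop m n) (u := Sum.inr w0) (v := Sum.inr a),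
            SimpleGraph.dist_comm (G := lollipop m n) (u := Sum.inr w0) (v := Sum.inr b),
            dist_to_inr0 hm0 hn0, dist_to_inr0 hm0 hn0]
          simp only [gA]; omega
    intro u v h
    obtain ⟨x, y, hxy, hx, hy, hfx, hfy⟩ := key u v h
    have := pair_le_sum (f := fopt m n) fopt_nonneg hxy hx hy
    rw [hfx, hfy] at this
    linarith


lemma fopt_sum (hm : 3 ≤ m) (hn : 2 ≤ n) :
    ∑ x, fopt m n x = (m : ℝ) / 2 := by
  have hm0 : 0 < m := by omega
  have hn0 : 0 < n := by omega
  rw [Fintype.sum_sum_type]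
  have h1 : ∑ a : Fin m, fopt m n (Sum.inl a) = (m : ℝ) / 2 - 1 / 2 := by
    have e1 : ∀ a : Fin m, fopt m n (Sum.inl a)
        = 1 / 2 - (if a = ⟨0, hm0⟩ then (1/2 : ℝ) else 0) := by
      intro a
      simp only [fopt, Fin.ext_iff]
      split_ifs <;> norm_num
    rw [Finset.sum_congr rfl fun a _ => e1 a, Finset.sum_sub_distrib,
      Finset.sum_ite_eq' Finset.univ (⟨0, hm0⟩ : Fin m)]
    simp
    ring
  have h2 : ∑ j : Fin n, fopt m n (Sum.inr j) = 1 / 2 := by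
    have e2 : ∀ j : Fin n, fopt m n (Sum.inr j)
        = if j = ⟨0, hn0⟩ then (1/2 : ℝ) else 0 := by
      intro j
      simp only [fopt, Fin.ext_iff]
    rw [Finset.sum_congr rfl fun j _ => e2 j,
      Finset.sum_ite_eq' Finset.univ (⟨0, hn0⟩ : Fin n)]
    simp
  rw [h1, h2]; ring

lemma lower_bound (hm : 3 ≤ m) (hn : 2 ≤ n) {f : Fin m ⊕ Fin n → ℝ}
    (hf : IsLRF (lollipop m n) f) : (m : ℝ) / 2 ≤ ∑ x, f x := by
  have hm0 : 0 < m := by omega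
  have hn0 : 0 < n := by omega
  set z0 : Fin m := ⟨0, hm0⟩ with hz0
  have hf0 : ∀ x, 0 ≤ f x := fun x => (hf.1 x).1
  -- (i) pairwise constraints among nonzero clique vertices
  have hpair : ∀ a b : Fin m, (a : ℕ) ≠ 0 → (b : ℕ) ≠ 0 → a ≠ b →
      1 ≤ f (Sum.inl a) + f (Sum.inl b) := by
    intro a b ha hb hab
    have h := hf.2 (Sum.inl a) (Sum.inl b) (adj_inl_inl hab)
    have hsub : locRes (lollipop m n) (Sum.inl a) (Sum.inl b)
        ⊆ {Sum.inl a, Sum.inl b} := by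
      intro x hx
      rw [mem_locRes, dist_to_inl hm0 hn0 ha, dist_to_inl hm0 hn0 hb] at hx
      rcases x with c | j
      · by_cases hca : c = a
        · subst hca; simp
        · by_cases hcb : c = b
          · subst hcb; simp
          · exact absurd (by simp [gB, hca, hcb]) hx
      · exact absurd (by simp [gB]) hx
    have := Finset.sum_le_sum_of_subset_of_nonneg hsub (fun i _ _ => hf0 i)
    rw [Finset.sum_pair (by simp [hab])] at this
    linarith
  -- (ii) constraint for edges incident to the hub z0
  have hzero : ∀ b : Fin m, (b : ℕ) ≠ 0 →
      1 ≤ f (Sum.inl z0) + f (Sum.inl b) + ∑ j : Fin n, f (Sum.inr j) := by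
    intro b hb
    have hbz : z0 ≠ b := by simp [hz0, Fin.ext_iff]; omega
    have h := hf.2 (Sum.inl z0) (Sum.inl b) (adj_inl_inl hbz)
    set T : Finset (Fin m ⊕ Fin n) :=
      insert (Sum.inl z0) (insert (Sum.inl b) (Finset.univ.image Sum.inr)) with hT
    have hsub : locRes (lollipop m n) (Sum.inl z0) (Sum.inl b) ⊆ T := by
      intro x hx
      rw [mem_locRes, dist_to_inl0 hm0 hn0, dist_to_inl hm0 hn0 hb] at hx
      rcases x with c | j
      · by_cases hc0 : c = z0
        · subst hc0; simp [hT]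
        · by_cases hcb : c = b
          · subst hcb; simp [hT]
          · have hc0' : (c : ℕ) ≠ 0 := by
              simp [hz0, Fin.ext_iff] at hc0; exact hc0
            exact absurd (by simp [gB, gC, hc0', hcb]) hx
      · simp [hT]
    have hTsum : ∑ x ∈ T, f x
        = f (Sum.inl z0) + f (Sum.inl b) + ∑ j : Fin n, f (Sum.inr j) := by
      rw [hT, Finset.sum_insert (by simp [hbz]), Finset.sum_insert (by simp),
        Finset.sum_image (fun x _ y _ h => Sum.inr_injective h), add_assoc]
    have := Finset.sum_le_sum_of_subset_of_nonneg hsub (fun i _ _ => hf0 i)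
    rw [hTsum] at this
    linarith
  -- minimizer over nonzero clique vertices
  set E : Finset (Fin m) := Finset.univ.erase z0 with hE
  have hEcard : E.card = m - 1 := by
    rw [hE, Finset.card_erase_of_mem (Finset.mem_univ _)]
    simp
  have hEne : E.Nonempty := ⟨⟨1, by omega⟩, by simp [hE, hz0, Fin.ext_iff]⟩
  obtain ⟨bs, hbsE, hbsmin⟩ := Finset.exists_min_image E (fun a => f (Sum.inl a)) hEne
  have hbs0 : (bs : ℕ) ≠ 0 := by
    rw [hE, Finset.mem_erase] at hbsE
    simpa [hz0, Fin.ext_iff] using hbsE.1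
  have hmemval : ∀ a : Fin m, a ∈ E → (a : ℕ) ≠ 0 := by
    intro a ha
    rw [hE, Finset.mem_erase] at ha
    simpa [hz0, Fin.ext_iff] using ha.1
  -- S bounds
  have hS1 : (E.card : ℝ) * f (Sum.inl bs) ≤ ∑ a ∈ E, f (Sum.inl a) := by
    have := Finset.card_nsmul_le_sum E (fun a => f (Sum.inl a)) _ hbsmin
    simpa [nsmul_eq_mul] using this
  have hS2 : ((E.erase bs).card : ℝ) * (1 - f (Sum.inl bs))
      ≤ ∑ a ∈ E.erase bs, f (Sum.inl a) := by
    have hb : ∀ a ∈ E.erase bs, 1 - f (Sum.inl bs) ≤ f (Sum.inl a) := by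
      intro a ha
      rw [Finset.mem_erase] at ha
      have := hpair bs a hbs0 (hmemval a ha.2) (Ne.symm ha.1)
      linarith
    have := Finset.card_nsmul_le_sum (E.erase bs) (fun a => f (Sum.inl a)) _ hb
    simpa [nsmul_eq_mul] using this
  have hS3 : ∑ a ∈ E.erase bs, f (Sum.inl a) + f (Sum.inl bs) = ∑ a ∈ E, f (Sum.inl a) :=
    Finset.sum_erase_add E _ hbsE
  have hcard2 : (E.erase bs).card = m - 2 := by
    rw [Finset.card_erase_of_mem hbsE, hEcard]
    omega
  have htot : ∑ x, f x
      = ∑ a ∈ E, f (Sum.inl a) + f (Sum.inl z0) + ∑ j : Fin n, f (Sum.inr j) := by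
    rw [Fintype.sum_sum_type]
    have := Finset.sum_erase_add Finset.univ (fun a => f (Sum.inl a)) (Finset.mem_univ z0)
    rw [hE]
    push_cast
    linarith
  have h4 := hzero bs hbs0
  have hc1 : (E.card : ℝ) = (m : ℝ) - 1 := by
    rw [hEcard]; push_cast [Nat.cast_sub (by omega : 1 ≤ m)]; ring
  have hc2 : ((E.erase bs).card : ℝ) = (m : ℝ) - 2 := by
    rw [hcard2]; push_cast [Nat.cast_sub (by omega : 2 ≤ m)]; ring
  rw [htot]
  rw [hc1] at hS1
  rw [hc2] at hS2
  have hm3 : (3 : ℝ) ≤ (m : ℝ) := by exact_mod_cast hm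
  nlinarith [hS1, hS2, hS3, h4, hm3]

end FracLocal

open FracLocal in
/-- For the lollipop graph `L_{m,n}` with `m ≥ 3`, `n ≥ 2`,
`ldim_f(L_{m,n}) = m/2`. -/
theorem stmt_6 (m n : ℕ) (hm : 3 ≤ m) (hn : 2 ≤ n) :
    ldimf (lollipop m n) = (m : ℝ) / 2 := by
  have hmem : (m : ℝ) / 2 ∈ {w : ℝ | ∃ f : (Fin m ⊕ Fin n) → ℝ,
      IsLRF (lollipop m n) f ∧ w = ∑ x, f x} :=
    ⟨fopt m n, fopt_isLRF hm hn, (fopt_sum hm hn).symm⟩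
  have hlb : ∀ w ∈ {w : ℝ | ∃ f : (Fin m ⊕ Fin n) → ℝ,
      IsLRF (lollipop m n) f ∧ w = ∑ x, f x}, (m : ℝ) / 2 ≤ w := by
    rintro w ⟨f, hf, rfl⟩
    exact lower_bound hm hn hf
  rw [ldimf]
  exact le_antisymm (csInf_le ⟨(m : ℝ) / 2, hlb⟩ hmem) (le_csInf ⟨_, hmem⟩ hlb)
end

section
/- For connected graphs G and H (each with at least one edge), ldim_f(G □ H) ≥ ldim_f(G). -/
/-!
A local resolving function `f` of `G □ H` projects to one of `G` by `a ↦ min 1 (∑ b, f (a, b))`,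
whose weight is at most that of `f`. Since distances add in `G □ H`, the local resolving
neighbourhood of the edge `(u, b)(v, b)` is `L(uv) × V(H)`, so the projection still gives weight
at least `1` to `L(uv)`: the truncation at `1` loses nothing because `t ↦ min 1 t` is subadditive
on nonnegative reals.
-/

open scoped Classical
open Finset

namespace FracLocal

open SimpleGraph

variable {α β : Type*}

lemma dist_boxProd_of_reachable {G : SimpleGraph α} {H : SimpleGraph β} {x y : α × β}
    (hG : G.Reachable x.1 y.1) (hH : H.Reachable x.2 y.2) :
    (G □ H).dist x y = G.dist x.1 y.1 + H.dist x.2 y.2 := by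
  apply Nat.cast_injective (R := ℕ∞)
  rw [Nat.cast_add, hG.coe_dist_eq_edist, hH.coe_dist_eq_edist,
    (reachable_boxProd.2 ⟨hG, hH⟩).coe_dist_eq_edist, edist_boxProd]

lemma min_one_sum_le_sum_min_one {ι : Type*} (s : Finset ι) {g : ι → ℝ}
    (hg : ∀ i ∈ s, 0 ≤ g i) : min 1 (∑ i ∈ s, g i) ≤ ∑ i ∈ s, min 1 (g i) := by
  refine le_sum_of_subadditive_on_pred (fun t : ℝ => min 1 t) (0 ≤ ·) (by simp)
    (fun x y hx hy => ?_) (fun _ _ => add_nonneg) g hg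
  simp only [min_def]
  split_ifs <;> linarith

variable [Fintype α] [Fintype β]

lemma locRes_boxProd_left {G : SimpleGraph α} {H : SimpleGraph β}
    (hG : G.Preconnected) (hH : H.Preconnected) (u v : α) (b : β) :
    locRes (G □ H) (u, b) (v, b) = locRes G u v ×ˢ univ := by
  ext ⟨x, y⟩
  simp only [locRes, mem_filter, mem_univ, true_and, mem_product, and_true]
  rw [dist_boxProd_of_reachable (hG x u) (hH y b), dist_boxProd_of_reachable (hG x v) (hH y b)]
  exact (Nat.add_right_cancel_iff).not

lemma mem_locRes_left {G : SimpleGraph α} {u v : α} (h : G.Adj u v) : u ∈ locRes G u v := by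
  simp [locRes, dist_eq_one_iff_adj.2 h]

lemma isLRF_one (G : SimpleGraph α) : IsLRF G 1 := by
  refine ⟨fun _ => ⟨zero_le_one, le_rfl⟩, fun u v h => ?_⟩
  simpa using card_pos.2 ⟨u, mem_locRes_left h⟩

lemma ldimf_le_sum {G : SimpleGraph α} {f : α → ℝ} (hf : IsLRF G f) : ldimf G ≤ ∑ x, f x := by
  refine csInf_le ⟨0, ?_⟩ ⟨f, hf, rfl⟩
  rintro _ ⟨g, hg, rfl⟩
  exact sum_nonneg fun x _ => (hg.1 x).1

lemma isLRF_boxProd_proj {G : SimpleGraph α} {H : SimpleGraph β}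
    (hG : G.Preconnected) (hH : H.Connected) {f : α × β → ℝ} (hf : IsLRF (G □ H) f) :
    IsLRF G (fun a => min 1 (∑ b, f (a, b))) := by
  have hsum_nonneg (a : α) : 0 ≤ ∑ b, f (a, b) := sum_nonneg fun b _ => (hf.1 (a, b)).1
  refine ⟨fun a => ⟨le_min zero_le_one (hsum_nonneg a), min_le_left _ _⟩, fun u v huv => ?_⟩
  obtain ⟨b⟩ := hH.nonempty
  have hedge := hf.2 (u, b) (v, b) (boxProd_adj_left.2 huv)
  rw [locRes_boxProd_left hG hH.preconnected, sum_product] at hedge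
  calc (1 : ℝ) = min 1 (∑ x ∈ locRes G u v, ∑ b, f (x, b)) := (min_eq_left hedge).symm
    _ ≤ _ := min_one_sum_le_sum_min_one _ fun x _ => hsum_nonneg x

end FracLocal

open FracLocal in
theorem stmt_19_general {α β : Type*} [Fintype α] [Fintype β]
    (G : SimpleGraph α) (H : SimpleGraph β)
    (hG : G.Connected) (hH : H.Connected) :
    ldimf G ≤ ldimf (G.boxProd H) := by
  refine le_csInf ⟨_, 1, isLRF_one _, rfl⟩ ?_
  rintro _ ⟨f, hf, rfl⟩
  calc ldimf G ≤ ∑ a, min 1 (∑ b, f (a, b)) :=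
        ldimf_le_sum (isLRF_boxProd_proj hG.preconnected hH hf)
    _ ≤ ∑ a, ∑ b, f (a, b) := sum_le_sum fun a _ => min_le_right _ _
    _ = ∑ x, f x := (Fintype.sum_prod_type f).symm

open FracLocal in
/-- For connected graphs `G`, `H`, each with at least one edge,
`ldim_f(G □ H) ≥ ldim_f(G)`. -/
theorem stmt_19 {α β : Type*} [Fintype α] [Fintype β]
    (G : SimpleGraph α) (H : SimpleGraph β)
    (hG : G.Connected) (hH : H.Connected)
    (heG : ∃ u v : α, G.Adj u v) (heH : ∃ u v : β, H.Adj u v) :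
    ldimf G ≤ ldimf (G.boxProd H) :=
  stmt_19_general G H hG hH
end
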